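/- arXiv:1907.00053 — 3 statements merged into one kernel-verified Lean document; each statement's English description precedes it below -/
import Mathlib

section
/- In a chemical reaction network, if b is straight-line reachable from a via flux vector u1, and c is straight-line reachable from a via flux vector u2, where u1 is independent of u2, then there exists a state d such that d is straight-line reachable from c via u1. -/
/-- A flux vector `u` is applicable at state `c` if every reaction with positive
flux has all of its reactants present (positive concentration) in `c`. -/
def Applicable {σ ρ : Type} (react : ρ → σ → ℕ) (u : ρ → ℝ) (c : σ → ℝ) : Prop :=
  ∀ r, 0 < u r → ∀ s, 0 < react r s → 0 < c s

/-- Net change of species `s` caused by applying flux vector `u`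
(the stoichiometry matrix applied to `u`). -/
noncomputable def StoichAct {σ ρ : Type} [Fintype ρ] (react prod : ρ → σ → ℕ)
    (u : ρ → ℝ) (s : σ) : ℝ :=
  ∑ r, u r * ((prod r s : ℝ) - (react r s : ℝ))

/-- State `d` is straight-line reachable from `c` via flux vector `u`. -/
def SLReach {σ ρ : Type} [Fintype ρ] (react prod : ρ → σ → ℕ)
    (u : ρ → ℝ) (c d : σ → ℝ) : Prop :=
  (∀ r, 0 ≤ u r) ∧ Applicable react u c ∧ (∀ s, 0 ≤ d s) ∧
    ∀ s, d s = c s + StoichAct react prod u s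

/-- Flux vector `u` consumes species `s`. -/
def Consumes {σ ρ : Type} (react : ρ → σ → ℕ) (u : ρ → ℝ) (s : σ) : Prop :=
  ∃ r, 0 < u r ∧ 0 < react r s

/-- Flux vector `u` produces species `s`. -/
def Produces {σ ρ : Type} (prod : ρ → σ → ℕ) (u : ρ → ℝ) (s : σ) : Prop :=
  ∃ r, 0 < u r ∧ 0 < prod r s

/-- `u1` is independent of `u2`: `u1` consumes no species produced or consumed by `u2`. -/
def Independent {σ ρ : Type} (react prod : ρ → σ → ℕ) (u1 u2 : ρ → ℝ) : Prop :=
  ∀ s, Consumes react u1 s → ¬ Consumes react u2 s ∧ ¬ Produces prod u2 s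

/-- Reachability: a finite sequence of straight-line segments. -/
def Reach {σ ρ : Type} [Fintype ρ] (react prod : ρ → σ → ℕ) (c d : σ → ℝ) : Prop :=
  Relation.ReflTransGen (fun x y => ∃ u, SLReach react prod u x y) c d

/-! Since `u1` consumes no species touched by `u2`, the `u2`-step leaves every species consumed
by `u1` at its value in `a`. Hence `u1` is still applicable at `c`, and `c + M u1` is
nonnegative: on species consumed by `u1` it agrees with `b`, and on the others `u1` only
produces. -/

section StoichAct

variable {σ ρ : Type} [Fintype ρ] {react prod : ρ → σ → ℕ} {u : ρ → ℝ} {s : σ}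

theorem stoichAct_eq_zero_of_not_consumes_of_not_produces (hu : ∀ r, 0 ≤ u r)
    (hc : ¬ Consumes react u s) (hp : ¬ Produces prod u s) :
    StoichAct react prod u s = 0 := by
  refine Finset.sum_eq_zero fun r _ => ?_
  rcases (hu r).eq_or_lt with hr | hr
  · simp [← hr]
  · have hreact : react r s = 0 := Nat.eq_zero_of_not_pos fun h => hc ⟨r, hr, h⟩
    have hprod : prod r s = 0 := Nat.eq_zero_of_not_pos fun h => hp ⟨r, hr, h⟩
    simp [hreact, hprod]

theorem stoichAct_nonneg_of_not_consumes (hu : ∀ r, 0 ≤ u r) (hc : ¬ Consumes react u s) :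
    0 ≤ StoichAct react prod u s := by
  refine Finset.sum_nonneg fun r _ => ?_
  rcases (hu r).eq_or_lt with hr | hr
  · simp [← hr]
  · have hreact : react r s = 0 := Nat.eq_zero_of_not_pos fun h => hc ⟨r, hr, h⟩
    simp only [hreact, Nat.cast_zero, sub_zero]
    positivity

end StoichAct

theorem Applicable.of_eq_of_consumes {σ ρ : Type} {react : ρ → σ → ℕ} {u : ρ → ℝ}
    {a c : σ → ℝ} (ha : Applicable react u a) (hca : ∀ s, Consumes react u s → c s = a s) :
    Applicable react u c := fun r hr s hs =>
  (hca s ⟨r, hr, hs⟩).symm ▸ ha r hr s hs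

theorem SLReach.apply_eq_of_not_consumes_of_not_produces {σ ρ : Type} [Fintype ρ]
    {react prod : ρ → σ → ℕ} {u : ρ → ℝ} {a c : σ → ℝ} {s : σ}
    (h : SLReach react prod u a c) (hc : ¬ Consumes react u s) (hp : ¬ Produces prod u s) :
    c s = a s := by
  rw [h.2.2.2 s, stoichAct_eq_zero_of_not_consumes_of_not_produces h.1 hc hp, add_zero]

theorem slreach_transfer_general {σ ρ : Type} [Fintype ρ] (react prod : ρ → σ → ℕ)
    (u1 u2 : ρ → ℝ) (a b c : σ → ℝ)
    (h1 : SLReach react prod u1 a b) (h2 : SLReach react prod u2 a c)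
    (hind : Independent react prod u1 u2) :
    ∃ d : σ → ℝ, SLReach react prod u1 c d := by
  obtain ⟨hu1, happ, hb, hab⟩ := h1
  have hca : ∀ s, Consumes react u1 s → c s = a s := fun s hs =>
    h2.apply_eq_of_not_consumes_of_not_produces (hind s hs).1 (hind s hs).2
  refine ⟨fun s => c s + StoichAct react prod u1 s, hu1, happ.of_eq_of_consumes hca,
    fun s => ?_, fun s => rfl⟩
  by_cases hs : Consumes react u1 s
  · simpa only [hca s hs, ← hab s] using hb s
  · exact add_nonneg (h2.2.2.1 s) (stoichAct_nonneg_of_not_consumes hu1 hs)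

/-- If `a →_{u1} b` and `a →_{u2} c` where `u1` is independent of `u2`, then
there is a state `d` with `c →_{u1} d`. -/
theorem slreach_transfer {σ ρ : Type} [Fintype ρ] (react prod : ρ → σ → ℕ)
    (u1 u2 : ρ → ℝ) (a b c : σ → ℝ) (ha : ∀ s, 0 ≤ a s)
    (h1 : SLReach react prod u1 a b) (h2 : SLReach react prod u2 a c)
    (hind : Independent react prod u1 u2) :
    ∃ d : σ → ℝ, SLReach react prod u1 c d :=
  slreach_transfer_general react prod u1 u2 a b c h1 h2 hind
end

section
/- In a chemical reaction network, the set of states reachable from a fixed state c is closed under convex combinations: if states \alpha_1, ..., \alpha_k are each reachable from c and a_1, ..., a_k > 0 with \sum a_i = 1, then \sum a_i \alpha_i is reachable from c. -/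
/-!
Reachability is invariant under scaling and under adding a nonnegative spectator state to both
ends, so `∑ aᵢ • c` can be driven to `∑ aᵢ • αᵢ` one summand at a time: the part `aⱼ • c` is
replaced by `aⱼ • αⱼ` while the other summands, being nonnegative, are carried along unchanged.
-/

open Finset

variable {σ ρ : Type} [Fintype ρ] {react prod : ρ → σ → ℕ}

theorem stoichAct_smul (γ : ℝ) (u : ρ → ℝ) (s : σ) :
    StoichAct react prod (γ • u) s = γ * StoichAct react prod u s := by
  simp only [StoichAct, Pi.smul_apply, smul_eq_mul, mul_sum, mul_assoc]

theorem SLReach.smul {u : ρ → ℝ} {c d : σ → ℝ} (h : SLReach react prod u c d) {γ : ℝ}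
    (hγ : 0 < γ) : SLReach react prod (γ • u) (γ • c) (γ • d) := by
  obtain ⟨hu, happ, hd, heq⟩ := h
  refine ⟨fun r => mul_nonneg hγ.le (hu r), fun r hr s hs => ?_,
    fun s => mul_nonneg hγ.le (hd s), fun s => ?_⟩
  · exact mul_pos hγ (happ r (pos_of_mul_pos_right hr hγ.le) s hs)
  · simp only [Pi.smul_apply, smul_eq_mul, stoichAct_smul, heq s]
    ring

theorem SLReach.add_right {u : ρ → ℝ} {c d e : σ → ℝ} (h : SLReach react prod u c d)
    (he : 0 ≤ e) : SLReach react prod u (c + e) (d + e) := by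
  obtain ⟨hu, happ, hd, heq⟩ := h
  refine ⟨hu, fun r hr s hs => add_pos_of_pos_of_nonneg (happ r hr s hs) (he s),
    fun s => add_nonneg (hd s) (he s), fun s => ?_⟩
  simp only [Pi.add_apply, heq s]
  ring

theorem Reach.refl (c : σ → ℝ) : Reach react prod c c :=
  Relation.ReflTransGen.refl

theorem Reach.smul {c d : σ → ℝ} (h : Reach react prod c d) {γ : ℝ} (hγ : 0 ≤ γ) :
    Reach react prod (γ • c) (γ • d) := by
  rcases hγ.eq_or_lt with rfl | hγ
  · simp only [zero_smul]
    exact Reach.refl 0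
  · exact h.lift (γ • ·) fun _ _ ⟨u, hu⟩ => ⟨γ • u, hu.smul hγ⟩

theorem Reach.add_right {c d e : σ → ℝ} (h : Reach react prod c d) (he : 0 ≤ e) :
    Reach react prod (c + e) (d + e) :=
  h.lift (· + e) fun _ _ ⟨u, hu⟩ => ⟨u, hu.add_right he⟩

theorem Reach.nonneg {c d : σ → ℝ} (h : Reach react prod c d) (hc : 0 ≤ c) : 0 ≤ d := by
  induction h with
  | refl => exact hc
  | tail _ hstep _ =>
    obtain ⟨_, _, _, hd, _⟩ := hstep
    exact hd

theorem reach_sum_smul {ι : Type} (t : Finset ι) {c : σ → ℝ} (hc : 0 ≤ c) {a : ι → ℝ}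
    {α : ι → σ → ℝ} (ha : ∀ i ∈ t, 0 ≤ a i) (hreach : ∀ i ∈ t, Reach react prod c (α i)) :
    Reach react prod ((∑ i ∈ t, a i) • c) (∑ i ∈ t, a i • α i) := by
  induction t using Finset.cons_induction with
  | empty =>
    simp only [sum_empty, zero_smul]
    exact Reach.refl 0
  | cons j t hj ih =>
    simp only [forall_mem_cons] at ha hreach
    have hrest : 0 ≤ (∑ i ∈ t, a i) • c := smul_nonneg (sum_nonneg ha.2) hc
    have hαj : 0 ≤ a j • α j := smul_nonneg ha.1 (hreach.1.nonneg hc)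
    have replace_j : Reach react prod (a j • c + (∑ i ∈ t, a i) • c)
        ((∑ i ∈ t, a i) • c + a j • α j) := by
      rw [add_comm _ (a j • α j)]
      exact (hreach.1.smul ha.1).add_right hrest
    have replace_rest : Reach react prod ((∑ i ∈ t, a i) • c + a j • α j)
        ((∑ i ∈ t, a i • α i) + a j • α j) := (ih ha.2 hreach.2).add_right hαj
    rw [sum_cons, sum_cons, add_smul, add_comm (a j • α j)]
    exact replace_j.trans replace_rest

/-- The set of states reachable from `c` is closed under convex combinations. -/
theorem reach_convex {σ ρ : Type} [Fintype ρ] (react prod : ρ → σ → ℕ)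
    (c : σ → ℝ) (hc : ∀ s, 0 ≤ c s) (k : ℕ)
    (α : Fin k → σ → ℝ) (a : Fin k → ℝ)
    (hpos : ∀ i, 0 < a i) (hsum : ∑ i, a i = 1)
    (hreach : ∀ i, Reach react prod c (α i)) :
    Reach react prod c (fun s => ∑ i, a i * α i s) := by
  have h := reach_sum_smul univ (react := react) (prod := prod) hc (fun i _ => (hpos i).le)
    fun i _ => hreach i
  rw [hsum, one_smul] at h
  convert h using 1
  ext s
  simp only [Finset.sum_apply, Pi.smul_apply, smul_eq_mul]
end

section
/- If c is a state of a CRN with P(c) = [c] (every species ever producible from c is already present in c), then every state reachable from c is straight-line reachable from c in a single segment. -/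
/-- The set of species present (with positive concentration) in state `d`. -/
def Present {σ : Type} (d : σ → ℝ) : Set σ := {s | 0 < d s}

/-- The set of possible species: species present in some state reachable from `c`. -/
def Possible {σ ρ : Type} [Fintype ρ] (react prod : ρ → σ → ℕ) (c : σ → ℝ) : Set σ :=
  ⋃ d ∈ {d | Reach react prod c d}, Present d

/-!
Every reaction applicable at a state reachable from `c` only consumes possible species, which
by assumption are already present in `c`; hence each segment of a path from `c` is applicable
at `c` itself, and the flux vectors of the segments can be summed into a single one.
-/

section CRN

variable {σ ρ : Type} {react prod : ρ → σ → ℕ}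

theorem Applicable.mono_present {u : ρ → ℝ} {x c : σ → ℝ} (h : Applicable react u x)
    (hxc : Present x ⊆ Present c) : Applicable react u c :=
  fun r hr s hs => hxc (h r hr s hs)

theorem Applicable.add {u v : ρ → ℝ} {c : σ → ℝ} (hu0 : ∀ r, 0 ≤ u r)
    (hu : Applicable react u c) (hv : Applicable react v c) : Applicable react (u + v) c := by
  intro r hr
  rcases (hu0 r).lt_or_eq with hur | hur
  · exact hu r hur
  · exact hv r (by simpa [← hur] using hr)

variable [Fintype ρ]

theorem stoichAct_zero : StoichAct react prod 0 = 0 := by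
  ext s
  simp [StoichAct]

theorem stoichAct_add (u v : ρ → ℝ) :
    StoichAct react prod (u + v) = StoichAct react prod u + StoichAct react prod v := by
  ext s
  simp only [StoichAct, Pi.add_apply, add_mul, Finset.sum_add_distrib]

theorem SLReach.zero {c : σ → ℝ} (hc : ∀ s, 0 ≤ c s) : SLReach react prod 0 c c :=
  ⟨fun _ => le_rfl, fun _ hr => absurd hr (lt_irrefl 0), hc,
    fun s => by simp [stoichAct_zero]⟩

theorem SLReach.add {u v : ρ → ℝ} {c x y : σ → ℝ} (hcx : SLReach react prod u c x)
    (hxy : SLReach react prod v x y) (hxc : Present x ⊆ Present c) :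
    SLReach react prod (u + v) c y := by
  obtain ⟨hu0, hu, -, hx⟩ := hcx
  obtain ⟨hv0, hv, hy0, hy⟩ := hxy
  refine ⟨fun r => add_nonneg (hu0 r) (hv0 r), hu.add hu0 (hv.mono_present hxc), hy0,
    fun s => ?_⟩
  rw [hy, hx, stoichAct_add, Pi.add_apply, add_assoc]

theorem present_subset_possible_of_reach {c x : σ → ℝ} (hx : Reach react prod c x) :
    Present x ⊆ Possible react prod c :=
  Set.subset_biUnion_of_mem (u := Present) hx

end CRN

/-- If every species ever producible from `c` is already present in `c`, then every
state reachable from `c` is straight-line reachable from `c` in a single segment. -/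
theorem reach_of_all_present {σ ρ : Type} [Fintype ρ]
    (react prod : ρ → σ → ℕ) (c : σ → ℝ) (hc : ∀ s, 0 ≤ c s)
    (hall : Possible react prod c = Present c) :
    ∀ d : σ → ℝ, Reach react prod c d → ∃ u, SLReach react prod u c d := by
  intro d hd
  induction hd with
  | refl => exact ⟨0, SLReach.zero hc⟩
  | tail hcx hxy ih =>
    obtain ⟨u, hu⟩ := ih
    obtain ⟨v, hv⟩ := hxy
    exact ⟨u + v, hu.add hv (hall ▸ present_subset_possible_of_reach hcx)⟩
end
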